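/- arXiv:1405.1863 — 2 statements merged into one kernel-verified Lean document; each statement's English description precedes it below -/
import Mathlib

section
/- Let a, b ∈ ℝ and c > 0. Then there exists a constant K > 0, depending only on a, b, c, such that for every real symmetric traceless 3×3 matrix Q one has (K/2)·tr(Q²) + (c/8)·(tr(Q²))² ≤ (K + a/2)·tr(Q²) − (b/3)·tr(Q³) + (c/4)·(tr(Q²))². -/
open Matrix

/-!
With the Frobenius norm, `tr(Q²) = ‖Q‖²` for symmetric `Q`, and Cauchy–Schwarz together with
submultiplicativity gives `|tr(Q³)| = |⟪Q, Q²⟫| ≤ ‖Q‖ ‖Q²‖ ≤ ‖Q‖³`. By AM–GM the cubic term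
`(b/3) tr(Q³)` is then absorbed by `(c/8) tr(Q²)²` plus a multiple of `(b²/c) tr(Q²)`, which
`K = 1 + |a| + b²/c` pays for.
-/

attribute [local instance] Matrix.frobeniusNormedAddCommGroup

namespace Matrix

variable {m n : Type*} [Fintype m] [Fintype n]

/-- The Frobenius norm of `A` is definitionally the norm of the nested `L²` vector used here. -/
theorem trace_transpose_mul_eq_inner (A B : Matrix m n ℝ) :
    (Aᵀ * B).trace =
      inner ℝ (WithLp.toLp 2 fun i => WithLp.toLp 2 (A i))
        (WithLp.toLp 2 fun i => WithLp.toLp 2 (B i)) := by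
  simp only [trace, diag, mul_apply, transpose_apply, PiLp.inner_apply, real_inner_eq_re_inner]
  simp [Finset.sum_comm (γ := n), mul_comm]

theorem frobenius_norm_sq_eq_trace (A : Matrix m n ℝ) : ‖A‖ ^ 2 = (Aᵀ * A).trace := by
  rw [trace_transpose_mul_eq_inner, real_inner_self_eq_norm_sq]
  rfl

theorem abs_trace_transpose_mul_le (A B : Matrix m n ℝ) : |(Aᵀ * B).trace| ≤ ‖A‖ * ‖B‖ := by
  rw [trace_transpose_mul_eq_inner]
  exact abs_real_inner_le_norm _ _

variable [DecidableEq n] {Q : Matrix n n ℝ}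

theorem IsSymm.trace_sq_eq_frobenius_norm_sq (hQ : Q.IsSymm) : (Q ^ 2).trace = ‖Q‖ ^ 2 := by
  rw [frobenius_norm_sq_eq_trace, hQ.eq, sq]

theorem IsSymm.abs_trace_pow_three_le (hQ : Q.IsSymm) : |(Q ^ 3).trace| ≤ ‖Q‖ ^ 3 :=
  calc |(Q ^ 3).trace| = |(Qᵀ * Q ^ 2).trace| := by rw [hQ.eq, pow_succ']
    _ ≤ ‖Q‖ * ‖Q ^ 2‖ := abs_trace_transpose_mul_le _ _
    _ ≤ ‖Q‖ * (‖Q‖ * ‖Q‖) := by gcongr; rw [sq]; exact frobenius_norm_mul Q Q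
    _ = ‖Q‖ ^ 3 := by ring

theorem IsSymm.sq_trace_pow_three_le (hQ : Q.IsSymm) :
    (Q ^ 3).trace ^ 2 ≤ (Q ^ 2).trace ^ 3 := by
  rw [hQ.trace_sq_eq_frobenius_norm_sq, ← sq_abs, ← pow_mul, mul_comm, pow_mul]
  exact pow_le_pow_left₀ (abs_nonneg _) hQ.abs_trace_pow_three_le 2

end Matrix

theorem mul_le_of_sq_le_pow_three {s t : ℝ} (b : ℝ) {c : ℝ} (hc : 0 < c) (ht : 0 ≤ t)
    (hst : s ^ 2 ≤ t ^ 3) : b * s ≤ b ^ 2 / c * t + c / 4 * t ^ 2 := by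
  refine le_of_sq_le_sq ?_ (by positivity)
  calc (b * s) ^ 2 = b ^ 2 * s ^ 2 := by ring
    _ ≤ b ^ 2 * t ^ 3 := by gcongr
    _ = 4 * (b ^ 2 / c * t) * (c / 4 * t ^ 2) := by field_simp
    _ ≤ (b ^ 2 / c * t + c / 4 * t ^ 2) ^ 2 := four_mul_le_sq_add _ _

theorem exists_K_bulk_lower_bound (a b c : ℝ) (hc : 0 < c) :
    ∃ K : ℝ, 0 < K ∧ ∀ Q : Matrix (Fin 3) (Fin 3) ℝ, Q.IsSymm → Q.trace = 0 →
      K / 2 * (Q ^ 2).trace + c / 8 * ((Q ^ 2).trace) ^ 2 ≤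
        (K + a / 2) * (Q ^ 2).trace - b / 3 * (Q ^ 3).trace
          + c / 4 * ((Q ^ 2).trace) ^ 2 := by
  refine ⟨1 + |a| + b ^ 2 / c, by positivity, fun Q hQ _ => ?_⟩
  have ht : 0 ≤ (Q ^ 2).trace := hQ.trace_sq_eq_frobenius_norm_sq ▸ sq_nonneg _
  have hcubic := mul_le_of_sq_le_pow_three (b / 3) (half_pos hc) ht hQ.sq_trace_pow_three_le
  have hcoeff : 2 * ((b / 3) ^ 2 / (c / 2)) ≤ 1 + |a| + a + b ^ 2 / c := by
    have hX : (b / 3) ^ 2 / (c / 2) = 2 / 9 * (b ^ 2 / c) := by field_simp; ring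
    linarith [neg_abs_le a, div_nonneg (sq_nonneg b) hc.le]
  linarith [mul_le_mul_of_nonneg_right hcoeff ht]
end

section
/- Let u : ℝ³ → ℝ³ be a smooth compactly supported vector field with div u = 0 and let Q : ℝ³ → M₃(ℝ) be a smooth compactly supported map with Q(x) symmetric for every x. Then, with the summation convention, ∫_{ℝ³} u_γ · ∂_γ∂_δ Q_{αβ} · ∂_β Q_{αδ} dx = 0. -/
open Matrix Finset MeasureTheory

noncomputable section

/-- Partial derivative in the `k`-th coordinate direction. -/
def pd (k : Fin 3) (f : (Fin 3 → ℝ) → ℝ) (x : Fin 3 → ℝ) : ℝ :=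
  fderiv ℝ f x (Pi.single k 1)

lemma pd_contDiff {f : (Fin 3 → ℝ) → ℝ} (hf : ContDiff ℝ (⊤ : ℕ∞) f) (k : Fin 3) :
    ContDiff ℝ (⊤ : ℕ∞) (pd k f) :=
  (hf.fderiv_right (by simp)).clm_apply contDiff_const

lemma pd_supp {f : (Fin 3 → ℝ) → ℝ} (hf : HasCompactSupport f) (k : Fin 3) :
    HasCompactSupport (pd k f) :=
  (hf.fderiv ℝ).comp_left (g := fun L : (Fin 3 → ℝ) →L[ℝ] ℝ => L (Pi.single k 1)) (by simp)

lemma pd_mul {f g : (Fin 3 → ℝ) → ℝ} (hf : Differentiable ℝ f) (hg : Differentiable ℝ g)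
    (k : Fin 3) (x : Fin 3 → ℝ) :
    pd k (fun y => f y * g y) x = pd k f x * g x + f x * pd k g x := by
  unfold pd
  rw [fderiv_fun_mul (hf x) (hg x)]
  simp
  ring

lemma pd_sum {ι : Type*} (s : Finset ι) (F : ι → (Fin 3 → ℝ) → ℝ)
    (hF : ∀ i ∈ s, Differentiable ℝ (F i)) (k : Fin 3) (x : Fin 3 → ℝ) :
    pd k (fun y => ∑ i ∈ s, F i y) x = ∑ i ∈ s, pd k (F i) x := by
  unfold pd
  rw [fderiv_fun_sum (fun i hi => (hF i hi) x)]
  simp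

lemma hcs_sum {ι : Type*} (s : Finset ι) (F : ι → (Fin 3 → ℝ) → ℝ)
    (h : ∀ i ∈ s, HasCompactSupport (F i)) :
    HasCompactSupport (fun x => ∑ i ∈ s, F i x) := by
  classical
  induction s using Finset.induction with
  | empty => simp only [Finset.sum_empty]; exact HasCompactSupport.zero
  | @insert a s ha ih =>
    simp_rw [Finset.sum_insert ha]
    exact (h a (Finset.mem_insert_self a s)).add
      (ih fun i hi => h i (Finset.mem_insert_of_mem hi))

lemma integral_pd_eq_zero (f : (Fin 3 → ℝ) → ℝ) (hf : ContDiff ℝ (⊤ : ℕ∞) f)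
    (h2f : HasCompactSupport f) (k : Fin 3) :
    ∫ x : Fin 3 → ℝ, pd k f x = 0 := by
  obtain ⟨C, hC⟩ := hf.lipschitzWith_of_hasCompactSupport h2f (by simp)
  have h := LipschitzWith.integral_lineDeriv_mul_eq (μ := (volume : Measure (Fin 3 → ℝ)))
    (LipschitzWith.const (1 : ℝ)) hC h2f (-(Pi.single k 1))
  simp only [lineDeriv, deriv_const', zero_mul, integral_zero, neg_neg, mul_one] at h
  have heq : ∀ x : Fin 3 → ℝ, lineDeriv ℝ f x (Pi.single k 1) = pd k f x := by
    intro x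
    rw [(hf.differentiable (by simp) x).lineDeriv_eq_fderiv]; rfl
  calc ∫ x : Fin 3 → ℝ, pd k f x
      = ∫ x : Fin 3 → ℝ, lineDeriv ℝ f x (Pi.single k 1) :=
        (integral_congr_ae (Filter.Eventually.of_forall fun x => heq x)).symm
    _ = 0 := h.symm

lemma triple_swap (g : Fin 3 → Fin 3 → Fin 3 → ℝ) :
    (∑ δ : Fin 3, ∑ α : Fin 3, ∑ β : Fin 3, g δ α β)
      = ∑ δ : Fin 3, ∑ α : Fin 3, ∑ β : Fin 3, g β α δ := by
  calc (∑ δ : Fin 3, ∑ α : Fin 3, ∑ β : Fin 3, g δ α β)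
      = ∑ δ : Fin 3, ∑ β : Fin 3, ∑ α : Fin 3, g δ α β :=
        Finset.sum_congr rfl fun _ _ => Finset.sum_comm
    _ = ∑ β : Fin 3, ∑ δ : Fin 3, ∑ α : Fin 3, g δ α β := Finset.sum_comm
    _ = ∑ δ : Fin 3, ∑ α : Fin 3, ∑ β : Fin 3, g β α δ :=
        Finset.sum_congr rfl fun _ _ => Finset.sum_comm

theorem transport_second_derivative_cancellation
    (u : (Fin 3 → ℝ) → (Fin 3 → ℝ))
    (Q : (Fin 3 → ℝ) → Matrix (Fin 3) (Fin 3) ℝ)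
    (hu : ∀ i : Fin 3, ContDiff ℝ (⊤ : ℕ∞) (fun y => u y i))
    (husupp : ∀ i : Fin 3, HasCompactSupport (fun y => u y i))
    (hdiv : ∀ x : Fin 3 → ℝ, ∑ k : Fin 3, pd k (fun y => u y k) x = 0)
    (hQ : ∀ i j : Fin 3, ContDiff ℝ (⊤ : ℕ∞) (fun y => Q y i j))
    (hQsupp : ∀ i j : Fin 3, HasCompactSupport (fun y => Q y i j))
    (hsymm : ∀ x : Fin 3 → ℝ, (Q x).IsSymm) :
    ∫ x : Fin 3 → ℝ,
        (∑ γ : Fin 3, ∑ δ : Fin 3, ∑ α : Fin 3, ∑ β : Fin 3,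
          u x γ * pd γ (pd δ (fun y => Q y α β)) x * pd β (fun y => Q y α δ) x) = 0 := by
  classical
  set T : Fin 3 → Fin 3 → Fin 3 → (Fin 3 → ℝ) → ℝ :=
    fun δ α β => pd δ (fun y => Q y α β) with hT
  have hTc : ∀ δ α β, ContDiff ℝ (⊤ : ℕ∞) (T δ α β) := fun δ α β => pd_contDiff (hQ α β) δ
  have hTs : ∀ δ α β, HasCompactSupport (T δ α β) := fun δ α β => pd_supp (hQsupp α β) δ
  set S : (Fin 3 → ℝ) → ℝ :=
    fun x => ∑ δ : Fin 3, ∑ α : Fin 3, ∑ β : Fin 3, T δ α β x * T β α δ x with hS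
  have hSc : ContDiff ℝ (⊤ : ℕ∞) S := by
    apply ContDiff.sum; intro δ _; apply ContDiff.sum; intro α _; apply ContDiff.sum
    intro β _; exact (hTc δ α β).mul (hTc β α δ)
  have hSs : HasCompactSupport S := by
    apply hcs_sum; intro δ _
    apply hcs_sum; intro α _
    apply hcs_sum; intro β _
    exact ((hTs δ α β).mul_right : HasCompactSupport ((T δ α β) * (T β α δ)))
  -- derivative of S
  have hpdS : ∀ (γ : Fin 3) (x : Fin 3 → ℝ),
      pd γ S x = 2 * ∑ δ : Fin 3, ∑ α : Fin 3, ∑ β : Fin 3,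
        pd γ (T δ α β) x * T β α δ x := by
    intro γ x
    have hdm : ∀ δ α β : Fin 3, Differentiable ℝ (fun y => T δ α β y * T β α δ y) :=
      fun δ α β => ((hTc δ α β).differentiable (by simp)).mul ((hTc β α δ).differentiable (by simp))
    have h1 : pd γ S x = ∑ δ : Fin 3, ∑ α : Fin 3, ∑ β : Fin 3,
        (pd γ (T δ α β) x * T β α δ x + T δ α β x * pd γ (T β α δ) x) := by
      rw [hS]
      rw [pd_sum _ _ (fun δ _ => by
        apply Differentiable.fun_sum; intro α _; apply Differentiable.fun_sum; intro β _
        exact hdm δ α β)]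
      refine Finset.sum_congr rfl fun δ _ => ?_
      rw [pd_sum _ _ (fun α _ => by
        apply Differentiable.fun_sum; intro β _; exact hdm δ α β)]
      refine Finset.sum_congr rfl fun α _ => ?_
      rw [pd_sum _ _ (fun β _ => hdm δ α β)]
      refine Finset.sum_congr rfl fun β _ => ?_
      exact pd_mul ((hTc δ α β).differentiable (by simp)) ((hTc β α δ).differentiable (by simp)) γ x
    rw [h1]
    rw [Finset.sum_congr rfl fun δ _ => Finset.sum_congr rfl fun α _ =>
      Finset.sum_add_distrib, Finset.sum_congr rfl fun δ _ => Finset.sum_add_distrib,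
      Finset.sum_add_distrib]
    have h2 : (∑ δ : Fin 3, ∑ α : Fin 3, ∑ β : Fin 3, T δ α β x * pd γ (T β α δ) x)
        = ∑ δ : Fin 3, ∑ α : Fin 3, ∑ β : Fin 3, pd γ (T δ α β) x * T β α δ x := by
      rw [triple_swap (fun δ α β => T δ α β x * pd γ (T β α δ) x)]
      exact Finset.sum_congr rfl fun δ _ => Finset.sum_congr rfl fun α _ =>
        Finset.sum_congr rfl fun β _ => mul_comm _ _
    rw [h2]; ring
  -- integrand rewritten
  have hintegrand : ∀ x : Fin 3 → ℝ,
      (∑ γ : Fin 3, ∑ δ : Fin 3, ∑ α : Fin 3, ∑ β : Fin 3,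
        u x γ * pd γ (pd δ (fun y => Q y α β)) x * pd β (fun y => Q y α δ) x)
      = (1/2) * ∑ γ : Fin 3, pd γ (fun y => u y γ * S y) x := by
    intro x
    have hd1 : ∀ γ : Fin 3, pd γ (fun y => u y γ * S y) x
        = pd γ (fun y => u y γ) x * S x + u x γ * pd γ S x :=
      fun γ => pd_mul ((hu γ).differentiable (by simp)) (hSc.differentiable (by simp)) γ x
    simp_rw [hd1]
    rw [Finset.sum_add_distrib, ← Finset.sum_mul, hdiv x, zero_mul, zero_add]
    simp_rw [hpdS]
    simp only [Finset.mul_sum]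
    refine Finset.sum_congr rfl fun γ _ => Finset.sum_congr rfl fun δ _ =>
      Finset.sum_congr rfl fun α _ => Finset.sum_congr rfl fun β _ => by ring
  rw [integral_congr_ae (Filter.Eventually.of_forall hintegrand)]
  rw [MeasureTheory.integral_const_mul]
  have hfc : ∀ γ : Fin 3, ContDiff ℝ (⊤ : ℕ∞) (fun y => u y γ * S y) := fun γ => (hu γ).mul hSc
  have hfs : ∀ γ : Fin 3, HasCompactSupport (fun y => u y γ * S y) := fun γ =>
    ((husupp γ).mul_right : HasCompactSupport ((fun y => u y γ) * S))
  rw [MeasureTheory.integral_finset_sum _ (fun γ _ =>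
    ((pd_contDiff (hfc γ) γ).continuous).integrable_of_hasCompactSupport (pd_supp (hfs γ) γ))]
  rw [Finset.sum_congr rfl fun γ _ => integral_pd_eq_zero _ (hfc γ) (hfs γ) γ]
  simp
end
end
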